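/- arXiv:2411.03747 — 2 statements merged into one kernel-verified Lean document; each statement's English description precedes it below -/
import Mathlib

section
/- Let A₀, …, A_r ∈ ℝ^{p×n} with r ≥ r*, let O_{r*} = [A₀; …; A_{r*}] have full column rank n, and let W(T) = Σ_{i,j=0}^{r} T^{i+j+1}/((i+j+1) i! j!) A_iᵀ A_j. Then for all 0 < T ≤ 1, λ_min(W(T)) ≥ a_r · T^{2r*+1} · σ_min(O_{r*})² / (r*!)², where a_r > 0 is the minimum eigenvalue of the (r+1)×(r+1) Hilbert matrix. -/
/-!
With `z = Λ(T) O v` (rows `scaledOutput`), the identity `1 / (i + j + 1) = ∫₀¹ x ^ (i + j)` turns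
`vᵀ W(T) v` into `T ∑ₖ zₖᵀ H zₖ`, with `H` the positive semidefinite Hilbert matrix, so it is at least
`T · λ_min(H) · ‖z‖²`. For `T ≤ 1` the weights `T ^ i / i!` decrease in `i`, so keeping only the
blocks `i ≤ r*` gives `‖z‖² ≥ (T ^ r* / r*!)² ‖O_{r*} v‖² ≥ (T ^ r* / r*!)² σ_min(O_{r*})²`.
-/

open Matrix

/-- The Euclidean norm of a finitely-indexed real vector. -/
noncomputable def enorm2 {m : Type*} [Fintype m] (v : m → ℝ) : ℝ :=
  Real.sqrt (∑ i, v i ^ 2)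

/-- The smallest singular value of a matrix: the minimum of `‖M v‖` over unit vectors. -/
noncomputable def sigmaMin {m n : Type*} [Fintype m] [Fintype n]
    (M : Matrix m n ℝ) : ℝ :=
  sInf {x | ∃ v : n → ℝ, enorm2 v = 1 ∧ x = enorm2 (M.mulVec v)}

/-- Minimum eigenvalue of a symmetric matrix, characterized as the minimum of the
quadratic form over unit vectors. -/
noncomputable def lambdaMin {n : Type*} [Fintype n] (W : Matrix n n ℝ) : ℝ :=
  sInf {x | ∃ v : n → ℝ, (∑ i, v i ^ 2) = 1 ∧ x = v ⬝ᵥ W.mulVec v}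

open Finset Nat

section QuadraticForm

variable {m : Type*} [Fintype m]

lemma isCompact_setOf_sum_sq_eq_one : IsCompact {v : m → ℝ | ∑ i, v i ^ 2 = 1} := by
  refine (isCompact_closedBall (0 : m → ℝ) 1).of_isClosed_subset
    (isClosed_eq (by fun_prop) continuous_const) fun v hv => ?_
  rw [mem_closedBall_zero_iff, pi_norm_le_iff_of_nonneg zero_le_one]
  intro i
  rw [Real.norm_eq_abs, ← sq_le_one_iff_abs_le_one, ← hv]
  exact single_le_sum (fun j _ => sq_nonneg (v j)) (mem_univ i)

lemma bddBelow_setOf_quadForm (M : Matrix m m ℝ) :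
    BddBelow {x | ∃ v : m → ℝ, (∑ i, v i ^ 2) = 1 ∧ x = v ⬝ᵥ M *ᵥ v} := by
  obtain ⟨c, hc⟩ := (isCompact_setOf_sum_sq_eq_one.image
    (by fun_prop : Continuous fun v : m → ℝ => v ⬝ᵥ M *ᵥ v)).bddBelow
  exact ⟨c, by rintro x ⟨v, hv, rfl⟩; exact hc ⟨v, hv, rfl⟩⟩

lemma lambdaMin_of_isEmpty [IsEmpty m] (M : Matrix m m ℝ) : lambdaMin M = 0 := by
  simp [lambdaMin]

lemma le_lambdaMin [Nonempty m] {M : Matrix m m ℝ} {c : ℝ}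
    (h : ∀ v : m → ℝ, ∑ i, v i ^ 2 = 1 → c ≤ v ⬝ᵥ M *ᵥ v) : c ≤ lambdaMin M := by
  refine le_csInf ?_ (by rintro x ⟨v, hv, rfl⟩; exact h v hv)
  classical
  obtain ⟨i⟩ := ‹Nonempty m›
  exact ⟨_, Pi.single i 1, by simp [Pi.single_apply, sum_ite_eq'], rfl⟩

lemma lambdaMin_nonneg {M : Matrix m m ℝ} (h : ∀ v : m → ℝ, 0 ≤ v ⬝ᵥ M *ᵥ v) :
    0 ≤ lambdaMin M :=
  Real.sInf_nonneg (by rintro x ⟨v, -, rfl⟩; exact h v)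

lemma lambdaMin_mul_sum_sq_le (M : Matrix m m ℝ) (z : m → ℝ) :
    lambdaMin M * ∑ i, z i ^ 2 ≤ z ⬝ᵥ M *ᵥ z := by
  obtain hs | hs := (sum_nonneg fun i _ => sq_nonneg (z i) : 0 ≤ ∑ i, z i ^ 2).eq_or_lt
  · have hz : z = 0 := funext fun i =>
      pow_eq_zero_iff two_ne_zero |>.mp ((sum_eq_zero_iff_of_nonneg fun j _ =>
        sq_nonneg (z j)).mp hs.symm i (mem_univ i))
    simp [hz]
  generalize hs_def : ∑ i, z i ^ 2 = s at hs ⊢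
  have hc : (Real.sqrt s)⁻¹ ^ 2 = s⁻¹ := by rw [inv_pow, Real.sq_sqrt hs.le]
  have hunit : ∑ i, ((Real.sqrt s)⁻¹ • z) i ^ 2 = 1 := by
    simp only [Pi.smul_apply, smul_eq_mul, mul_pow, ← mul_sum, hc, hs_def]
    exact inv_mul_cancel₀ hs.ne'
  have hle : lambdaMin M ≤ s⁻¹ * (z ⬝ᵥ M *ᵥ z) := by
    refine csInf_le (bddBelow_setOf_quadForm M) ⟨_, hunit, ?_⟩
    rw [mulVec_smul, dotProduct_smul, smul_dotProduct, smul_smul, ← sq, hc, smul_eq_mul]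
  calc lambdaMin M * s ≤ s⁻¹ * (z ⬝ᵥ M *ᵥ z) * s := by gcongr
    _ = z ⬝ᵥ M *ᵥ z := by field_simp [hs.ne']

end QuadraticForm

section SingularValue

variable {m k : Type*} [Fintype m] [Fintype k]

lemma sigmaMin_of_isEmpty [IsEmpty k] (M : Matrix m k ℝ) : sigmaMin M = 0 := by
  simp [sigmaMin, enorm2]

lemma sigmaMin_nonneg (M : Matrix m k ℝ) : 0 ≤ sigmaMin M :=
  Real.sInf_nonneg (by rintro x ⟨v, -, rfl⟩; exact Real.sqrt_nonneg _)

lemma sigmaMin_sq_le {M : Matrix m k ℝ} {v : k → ℝ} (hv : ∑ i, v i ^ 2 = 1) :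
    sigmaMin M ^ 2 ≤ ∑ i, (M *ᵥ v) i ^ 2 := by
  have hle : sigmaMin M ≤ enorm2 (M *ᵥ v) :=
    csInf_le ⟨0, by rintro x ⟨u, -, rfl⟩; exact Real.sqrt_nonneg _⟩
      ⟨v, by simp [enorm2, hv], rfl⟩
  calc sigmaMin M ^ 2 ≤ enorm2 (M *ᵥ v) ^ 2 := pow_le_pow_left₀ (sigmaMin_nonneg M) hle 2
    _ = ∑ i, (M *ᵥ v) i ^ 2 := Real.sq_sqrt (sum_nonneg fun i _ => sq_nonneg _)

end SingularValue

noncomputable def hilbertMatrix (m : ℕ) : Matrix (Fin m) (Fin m) ℝ :=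
  Matrix.of fun i j => (1 : ℝ) / (((i : ℕ) + (j : ℕ) + 1 : ℕ) : ℝ)

lemma dotProduct_hilbertMatrix_mulVec {m : ℕ} (u : Fin m → ℝ) :
    u ⬝ᵥ hilbertMatrix m *ᵥ u = ∫ x in (0 : ℝ)..1, (∑ i, u i * x ^ (i : ℕ)) ^ 2 := by
  have hsq (x : ℝ) : (∑ i, u i * x ^ (i : ℕ)) ^ 2 =
      ∑ i, ∑ j, u i * u j * x ^ ((i : ℕ) + (j : ℕ)) := by
    simp only [sq, sum_mul_sum, pow_add]
    exact sum_congr rfl fun i _ => sum_congr rfl fun j _ => by ring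
  simp_rw [hsq]
  rw [intervalIntegral.integral_finsetSum fun i _ =>
    (Continuous.intervalIntegrable (by fun_prop) _ _)]
  refine sum_congr rfl fun i _ => ?_
  rw [intervalIntegral.integral_finsetSum fun j _ =>
    (Continuous.intervalIntegrable (by fun_prop) _ _), mulVec, dotProduct, mul_sum]
  refine sum_congr rfl fun j _ => ?_
  rw [intervalIntegral.integral_const_mul, integral_pow, hilbertMatrix, of_apply]
  push_cast
  ring

lemma lambdaMin_hilbertMatrix_nonneg (m : ℕ) : 0 ≤ lambdaMin (hilbertMatrix m) :=
  lambdaMin_nonneg fun u => by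
    rw [dotProduct_hilbertMatrix_mulVec]
    exact intervalIntegral.integral_nonneg zero_le_one fun x _ => sq_nonneg _

lemma sum_sum_mul_dotProduct_eq_sum_hilbertMatrix {p : Type*} [Fintype p] (m : ℕ)
    (c : ℕ → ℝ) (w : ℕ → p → ℝ) :
    ∑ i ∈ range m, ∑ j ∈ range m, c i * c j / ((i + j + 1 : ℕ) : ℝ) * (w i ⬝ᵥ w j) =
      ∑ k, (fun i : Fin m => c i * w i k) ⬝ᵥ hilbertMatrix m *ᵥ fun i => c i * w i k := by
  simp only [sum_range, dotProduct, mulVec, mul_sum, hilbertMatrix, of_apply]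
  symm
  rw [sum_comm]
  refine sum_congr rfl fun i _ => ?_
  rw [sum_comm]
  refine sum_congr rfl fun j _ => sum_congr rfl fun k _ => ?_
  ring

lemma dotProduct_sum_smul_transpose_mul_mulVec {ι p n : Type*} [Fintype p] [Fintype n]
    (s : Finset ι) (a : ι → ι → ℝ) (A : ι → Matrix p n ℝ) (v : n → ℝ) :
    v ⬝ᵥ (∑ i ∈ s, ∑ j ∈ s, a i j • ((A i)ᵀ * A j)) *ᵥ v =
      ∑ i ∈ s, ∑ j ∈ s, a i j * (A i *ᵥ v ⬝ᵥ A j *ᵥ v) := by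
  simp only [sum_mulVec, dotProduct_sum, smul_mulVec, dotProduct_smul, ← mulVec_mulVec,
    dotProduct_mulVec, vecMul_transpose, smul_eq_mul]

lemma pow_div_factorial_eq (T : ℝ) (i j : ℕ) :
    T ^ (i + j + 1) / (((i + j + 1) * i ! * j ! : ℕ) : ℝ) =
      T * (T ^ i / i ! * (T ^ j / j !) / ((i + j + 1 : ℕ) : ℝ)) := by
  have := i.factorial_pos; have := j.factorial_pos
  field_simp
  push_cast
  ring

lemma pow_div_factorial_le {T : ℝ} (hT0 : 0 ≤ T) (hT1 : T ≤ 1) {i j : ℕ} (hij : i ≤ j) :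
    T ^ j / j ! ≤ T ^ i / i ! :=
  div_le_div₀ (by positivity) (pow_le_pow_of_le_one hT0 hT1 hij) (by positivity)
    (by exact_mod_cast Nat.factorial_le hij)

lemma sq_pow_div_factorial_mul_sum_le {T : ℝ} (hT0 : 0 ≤ T) (hT1 : T ≤ 1) {s r : ℕ}
    (hsr : s ≤ r) {f : ℕ → ℝ} (hf : ∀ i, 0 ≤ f i) :
    (T ^ s / s !) ^ 2 * ∑ i ∈ range (s + 1), f i ≤ ∑ i ∈ range (r + 1), (T ^ i / i !) ^ 2 * f i :=
  calc (T ^ s / s !) ^ 2 * ∑ i ∈ range (s + 1), f i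
      ≤ ∑ i ∈ range (s + 1), (T ^ i / i !) ^ 2 * f i := by
        rw [mul_sum]
        refine sum_le_sum fun i hi => ?_
        have hle := pow_div_factorial_le hT0 hT1 (Nat.lt_succ_iff.mp (mem_range.mp hi))
        exact mul_le_mul_of_nonneg_right (pow_le_pow_left₀ (by positivity) hle 2) (hf i)
    _ ≤ ∑ i ∈ range (r + 1), (T ^ i / i !) ^ 2 * f i :=
        sum_le_sum_of_subset_of_nonneg (range_subset_range.mpr (by omega))
          fun i _ _ => mul_nonneg (sq_nonneg _) (hf i)

lemma sum_sq_mulVec_stack {p n : Type*} [Fintype p] [Fintype n] {s : ℕ}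
    (A : ℕ → Matrix p n ℝ) {O : Matrix (Fin s × p) n ℝ} (hO : ∀ k i j, O (k, i) j = A k i j)
    (v : n → ℝ) :
    ∑ q, (O *ᵥ v) q ^ 2 = ∑ i ∈ range s, ∑ k, (A i *ᵥ v) k ^ 2 := by
  rw [Fintype.sum_prod_type, sum_range]
  simp only [mulVec, dotProduct, hO]

section Gramian

variable {p n : Type*} [Fintype p] [Fintype n]

/-- Row `k` of the paper's `Λ(T) O v`, where `O = [A₀; …; A_r]` and `Λ(T) = diag (T ^ i / i!)`. -/
noncomputable def scaledOutput (r : ℕ) (A : ℕ → Matrix p n ℝ) (T : ℝ) (v : n → ℝ) (k : p) :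
    Fin (r + 1) → ℝ :=
  fun i => T ^ (i : ℕ) / (i : ℕ)! * (A i *ᵥ v) k

lemma dotProduct_gramian_mulVec (r : ℕ) (A : ℕ → Matrix p n ℝ) (T : ℝ) (v : n → ℝ) :
    v ⬝ᵥ (∑ i ∈ range (r + 1), ∑ j ∈ range (r + 1),
      (T ^ (i + j + 1) / (((i + j + 1) * i ! * j ! : ℕ) : ℝ)) • ((A i)ᵀ * A j)) *ᵥ v =
      T * ∑ k, scaledOutput r A T v k ⬝ᵥ hilbertMatrix (r + 1) *ᵥ scaledOutput r A T v k := by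
  rw [dotProduct_sum_smul_transpose_mul_mulVec]
  simp_rw [pow_div_factorial_eq, mul_assoc, ← mul_sum]
  exact congrArg (T * ·) <| sum_sum_mul_dotProduct_eq_sum_hilbertMatrix (r + 1)
    (fun i => T ^ i / i !) (fun i => A i *ᵥ v)

lemma sum_sum_scaledOutput_sq (r : ℕ) (A : ℕ → Matrix p n ℝ) (T : ℝ) (v : n → ℝ) :
    ∑ k, ∑ i, scaledOutput r A T v k i ^ 2 =
      ∑ i ∈ range (r + 1), (T ^ i / i !) ^ 2 * ∑ k, (A i *ᵥ v) k ^ 2 := by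
  rw [sum_comm, sum_range]
  simp only [scaledOutput, mul_pow, mul_sum]

end Gramian

lemma le_dotProduct_gramian_mulVec {p n : Type*} [Fintype p] [Fintype n] {r s : ℕ} (hsr : s ≤ r)
    (A : ℕ → Matrix p n ℝ) {O : Matrix (Fin (s + 1) × p) n ℝ} (hO : ∀ k i j, O (k, i) j = A k i j)
    {T : ℝ} (hT0 : 0 < T) (hT1 : T ≤ 1) {v : n → ℝ} (hv : ∑ i, v i ^ 2 = 1) :
    lambdaMin (hilbertMatrix (r + 1)) * T ^ (2 * s + 1) * sigmaMin O ^ 2 / (s ! : ℝ) ^ 2 ≤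
      v ⬝ᵥ (∑ i ∈ range (r + 1), ∑ j ∈ range (r + 1),
        (T ^ (i + j + 1) / (((i + j + 1) * i ! * j ! : ℕ) : ℝ)) • ((A i)ᵀ * A j)) *ᵥ v := by
  set a := lambdaMin (hilbertMatrix (r + 1))
  have ha : 0 ≤ a := lambdaMin_hilbertMatrix_nonneg (r + 1)
  have hσ : sigmaMin O ^ 2 ≤ ∑ i ∈ range (s + 1), ∑ k, (A i *ᵥ v) k ^ 2 :=
    sum_sq_mulVec_stack A hO v ▸ sigmaMin_sq_le hv
  calc a * T ^ (2 * s + 1) * sigmaMin O ^ 2 / (s ! : ℝ) ^ 2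
      = T * (a * ((T ^ s / s !) ^ 2 * sigmaMin O ^ 2)) := by
        have := s.factorial_pos
        field_simp
        ring
    _ ≤ T * (a * ∑ i ∈ range (r + 1), (T ^ i / i !) ^ 2 * ∑ k, (A i *ᵥ v) k ^ 2) := by
        gcongr
        exact (mul_le_mul_of_nonneg_left hσ (sq_nonneg _)).trans
          (sq_pow_div_factorial_mul_sum_le hT0.le hT1 hsr fun i => sum_nonneg fun k _ => sq_nonneg _)
    _ = T * ∑ k, a * ∑ i, scaledOutput r A T v k i ^ 2 := by
        rw [← mul_sum, sum_sum_scaledOutput_sq]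
    _ ≤ T * ∑ k, scaledOutput r A T v k ⬝ᵥ hilbertMatrix (r + 1) *ᵥ scaledOutput r A T v k := by
        gcongr with k
        exact lambdaMin_mul_sum_sq_le _ _
    _ = _ := (dotProduct_gramian_mulVec r A T v).symm

theorem stmt7_general {p n : ℕ} (r rs : ℕ) (hr : rs ≤ r)
    (A : ℕ → Matrix (Fin p) (Fin n) ℝ)
    (Ors : Matrix (Fin (rs + 1) × Fin p) (Fin n) ℝ)
    (hOrs : ∀ k i j, Ors (k, i) j = A k i j)
    (Hil : Matrix (Fin (r + 1)) (Fin (r + 1)) ℝ)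
    (hHil : ∀ i j : Fin (r + 1),
      Hil i j = (1 : ℝ) / (((i : ℕ) + (j : ℕ) + 1 : ℕ) : ℝ))
    (W : ℝ → Matrix (Fin n) (Fin n) ℝ)
    (hW : ∀ T : ℝ, W T = ∑ i ∈ Finset.range (r + 1), ∑ j ∈ Finset.range (r + 1),
      (T ^ (i + j + 1) /
        (((i + j + 1) * Nat.factorial i * Nat.factorial j : ℕ) : ℝ)) • ((A i)ᵀ * A j)) :
    ∀ T : ℝ, 0 < T → T ≤ 1 →
      lambdaMin Hil * T ^ (2 * rs + 1) * (sigmaMin Ors) ^ 2 / (Nat.factorial rs : ℝ) ^ 2 ≤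
        lambdaMin (W T) := by
  intro T hT0 hT1
  obtain rfl : Hil = hilbertMatrix (r + 1) := Matrix.ext hHil
  rcases isEmpty_or_nonempty (Fin n)
  · simp [sigmaMin_of_isEmpty, lambdaMin_of_isEmpty]
  · exact le_lambdaMin fun v hv => hW T ▸ le_dotProduct_gramian_mulVec hr A hOrs hT0 hT1 hv

theorem stmt7 {p n : ℕ} (r rs : ℕ) (hr : rs ≤ r)
    (A : ℕ → Matrix (Fin p) (Fin n) ℝ)
    (Ors : Matrix (Fin (rs + 1) × Fin p) (Fin n) ℝ)
    (hOrs : ∀ k i j, Ors (k, i) j = A k i j)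
    (hrank : Ors.rank = n)
    (Hil : Matrix (Fin (r + 1)) (Fin (r + 1)) ℝ)
    (hHil : ∀ i j : Fin (r + 1),
      Hil i j = (1 : ℝ) / (((i : ℕ) + (j : ℕ) + 1 : ℕ) : ℝ))
    (W : ℝ → Matrix (Fin n) (Fin n) ℝ)
    (hW : ∀ T : ℝ, W T = ∑ i ∈ Finset.range (r + 1), ∑ j ∈ Finset.range (r + 1),
      (T ^ (i + j + 1) /
        (((i + j + 1) * Nat.factorial i * Nat.factorial j : ℕ) : ℝ)) • ((A i)ᵀ * A j)) :
    ∀ T : ℝ, 0 < T → T ≤ 1 →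
      lambdaMin Hil * T ^ (2 * rs + 1) * (sigmaMin Ors) ^ 2 / (Nat.factorial rs : ℝ) ^ 2 ≤
        lambdaMin (W T) :=
  stmt7_general r rs hr A Ors hOrs Hil hHil W hW
end

section
/- Let A₀, …, A_r ∈ ℝ^{p×n}, and suppose there exists a unit vector v ∈ ℝⁿ with A_k v = 0 for all k < r* and A_{r*} v ≠ 0, where r* ≤ r. Let W(T) = Σ_{i,j=0}^{r} T^{i+j+1}/((i+j+1) i! j!) A_iᵀ A_j. Then for every ε > 0 there exists δ > 0 such that for all 0 < T < δ, λ_min(W(T)) ≤ (1+ε) · T^{2r*+1} · ‖A_{r*} v‖² / ((r*!)² (2r*+1)). -/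
open Matrix

lemma lambdaMin_le_quad {n : Type*} [Fintype n] (W : Matrix n n ℝ) (u : n → ℝ)
    (hu : (∑ i, u i ^ 2) = 1) : lambdaMin W ≤ u ⬝ᵥ W.mulVec u := by
  apply csInf_le
  · refine ⟨-(∑ i, ∑ j, |W i j|), ?_⟩
    rintro x ⟨w, hw, rfl⟩
    have habs : ∀ i, |w i| ≤ 1 := by
      intro i
      have h1 : w i ^ 2 ≤ 1 := by
        rw [← hw]
        exact Finset.single_le_sum (fun j _ => sq_nonneg (w j)) (Finset.mem_univ i)
      nlinarith [abs_nonneg (w i), sq_abs (w i)]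
    have hb : |w ⬝ᵥ W.mulVec w| ≤ ∑ i, ∑ j, |W i j| := by
      simp only [dotProduct, Matrix.mulVec]
      calc |∑ i, w i * ∑ j, W i j * w j| ≤ ∑ i, |w i * ∑ j, W i j * w j| :=
            Finset.abs_sum_le_sum_abs _ _
        _ ≤ ∑ i, ∑ j, |W i j| := by
            apply Finset.sum_le_sum; intro i _
            rw [abs_mul]
            calc |w i| * |∑ j, W i j * w j| ≤ 1 * ∑ j, |W i j * w j| :=
              mul_le_mul (habs i) (Finset.abs_sum_le_sum_abs _ _) (abs_nonneg _) zero_le_one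
              _ = ∑ j, |W i j| * |w j| := by rw [one_mul]; simp [abs_mul]
              _ ≤ ∑ j, |W i j| * 1 :=
                Finset.sum_le_sum fun j _ => mul_le_mul_of_nonneg_left (habs j) (abs_nonneg _)
              _ = ∑ j, |W i j| := by simp
    linarith [neg_abs_le (w ⬝ᵥ W.mulVec w)]
  · exact ⟨u, hu, rfl⟩

theorem stmt8 {p n : ℕ} (r rs : ℕ) (hr : rs ≤ r)
    (A : ℕ → Matrix (Fin p) (Fin n) ℝ)
    (v : Fin n → ℝ) (hv : (∑ i, v i ^ 2) = 1)
    (hker : ∀ k < rs, (A k).mulVec v = 0)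
    (hne : (A rs).mulVec v ≠ 0)
    (W : ℝ → Matrix (Fin n) (Fin n) ℝ)
    (hW : ∀ T : ℝ, W T = ∑ i ∈ Finset.range (r + 1), ∑ j ∈ Finset.range (r + 1),
      (T ^ (i + j + 1) /
        (((i + j + 1) * Nat.factorial i * Nat.factorial j : ℕ) : ℝ)) • ((A i)ᵀ * A j)) :
    ∀ ε > (0 : ℝ), ∃ δ > (0 : ℝ), ∀ T : ℝ, 0 < T → T < δ →
      lambdaMin (W T) ≤ (1 + ε) * T ^ (2 * rs + 1) * (enorm2 ((A rs).mulVec v)) ^ 2 /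
        ((Nat.factorial rs : ℝ) ^ 2 * (2 * (rs : ℝ) + 1)) := by
  intro ε hε
  set u : Fin p → ℝ := (A rs).mulVec v with hudef
  -- quadratic form as a double sum
  have hquad : ∀ T : ℝ, v ⬝ᵥ (W T).mulVec v =
      ∑ i ∈ Finset.range (r + 1), ∑ j ∈ Finset.range (r + 1),
        (T ^ (i + j + 1) / (((i + j + 1) * Nat.factorial i * Nat.factorial j : ℕ) : ℝ)) *
          ((A i).mulVec v ⬝ᵥ (A j).mulVec v) := by
    have hsum1 : ∀ (s : Finset ℕ) (M : ℕ → Matrix (Fin n) (Fin n) ℝ),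
        (∑ i ∈ s, M i).mulVec v = ∑ i ∈ s, (M i).mulVec v := fun s M =>
      map_sum (Matrix.mulVec.addMonoidHomLeft v) M s
    have hsum2 : ∀ (s : Finset ℕ) (f : ℕ → Fin n → ℝ),
        v ⬝ᵥ (∑ i ∈ s, f i) = ∑ i ∈ s, v ⬝ᵥ f i := by
      intro s f
      simp only [dotProduct, Finset.sum_apply, Finset.mul_sum]
      exact Finset.sum_comm
    intro T
    rw [hW T, hsum1, hsum2]
    refine Finset.sum_congr rfl fun i _ => ?_
    rw [hsum1, hsum2]
    refine Finset.sum_congr rfl fun j _ => ?_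
    rw [Matrix.smul_mulVec, dotProduct_smul, smul_eq_mul]
    congr 1
    rw [← Matrix.mulVec_mulVec, Matrix.dotProduct_mulVec, Matrix.vecMul_transpose]
  set m := r + 1 - rs with hm
  have hm0 : 0 < m := by omega
  set c : ℕ → ℕ → ℝ := fun a b =>
    ((((rs + a) + (rs + b) + 1) * Nat.factorial (rs + a) * Nat.factorial (rs + b) : ℕ) : ℝ)
    with hcdef
  set w : ℕ → ℕ → ℝ := fun a b => (A (rs + a)).mulVec v ⬝ᵥ (A (rs + b)).mulVec v with hwdef
  set g : ℝ → ℝ := fun T =>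
    ∑ a ∈ Finset.range m, ∑ b ∈ Finset.range m, T ^ (a + b) * (w a b / c a b) with hgdef
  -- f T = T^(2rs+1) * g T
  have hfg : ∀ T : ℝ, v ⬝ᵥ (W T).mulVec v = T ^ (2 * rs + 1) * g T := by
    intro T
    rw [hquad T]
    have hstep1 : ∀ F : ℕ → ℝ, (∀ i < rs, F i = 0) →
        ∑ i ∈ Finset.range (r + 1), F i = ∑ a ∈ Finset.range m, F (rs + a) := by
      intro F hF
      rw [← Finset.sum_Ico_eq_sum_range]
      refine (Finset.sum_subset ?_ ?_).symm
      · intro i hi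
        simp only [Finset.mem_Ico, Finset.mem_range] at *
        omega
      · intro i hi hni
        simp only [Finset.mem_Ico, Finset.mem_range] at *
        exact hF i (by omega)
    rw [hstep1 _ (fun i hi => by
      apply Finset.sum_eq_zero; intro j _
      rw [hker i hi]; simp)]
    simp only [hgdef]
    rw [Finset.mul_sum]
    refine Finset.sum_congr rfl fun a _ => ?_
    rw [hstep1 _ (fun j hj => by rw [hker j hj]; simp)]
    rw [Finset.mul_sum]
    refine Finset.sum_congr rfl fun b _ => ?_
    simp only [hwdef, hcdef]
    rw [show (rs + a) + (rs + b) + 1 = (2 * rs + 1) + (a + b) by ring, pow_add]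
    ring
  -- value at 0
  have hg0 : g 0 = w 0 0 / c 0 0 := by
    simp only [hgdef]
    rw [Finset.sum_eq_single 0]
    · rw [Finset.sum_eq_single 0]
      · norm_num
      · intro b _ hb
        rw [zero_pow (by omega : 0 + b ≠ 0), zero_mul]
      · intro h; exact absurd (Finset.mem_range.mpr hm0) h
    · intro a _ ha
      apply Finset.sum_eq_zero; intro b _
      rw [zero_pow (by omega : a + b ≠ 0), zero_mul]
    · intro h; exact absurd (Finset.mem_range.mpr hm0) h
  have hc00 : c 0 0 = (Nat.factorial rs : ℝ) ^ 2 * (2 * (rs : ℝ) + 1) := by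
    simp only [hcdef]
    push_cast
    ring
  have hc00pos : (0 : ℝ) < c 0 0 := by
    rw [hc00]
    positivity
  have hw00pos : (0 : ℝ) < w 0 0 := by
    simp only [hwdef, Nat.add_zero]
    have h1 : (A rs).mulVec v ⬝ᵥ (A rs).mulVec v ≠ 0 := fun h =>
      hne (dotProduct_self_eq_zero.mp h)
    have h2 : (0 : ℝ) ≤ (A rs).mulVec v ⬝ᵥ (A rs).mulVec v := by
      simp only [dotProduct]
      exact Finset.sum_nonneg fun i _ => mul_self_nonneg _
    exact lt_of_le_of_ne h2 (Ne.symm h1)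
  have hg0pos : 0 < g 0 := by rw [hg0]; positivity
  -- continuity
  have hgc : Continuous g := by
    rw [hgdef]
    apply continuous_finset_sum; intro a _
    apply continuous_finset_sum; intro b _
    exact (continuous_pow _).mul continuous_const
  have hlt : g 0 < (1 + ε) * (w 0 0 / c 0 0) := by
    rw [hg0]
    nlinarith [div_pos hw00pos hc00pos]
  have hev : ∀ᶠ T in nhds (0 : ℝ), g T < (1 + ε) * (w 0 0 / c 0 0) :=
    (hgc.tendsto 0).eventually_lt_const hlt
  rw [Metric.eventually_nhds_iff] at hev
  obtain ⟨δ, hδ, hδ'⟩ := hev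
  refine ⟨δ, hδ, fun T hT hTδ => ?_⟩
  have hgT : g T < (1 + ε) * (w 0 0 / c 0 0) := by
    apply hδ'
    rw [Real.dist_eq, sub_zero, abs_of_pos hT]
    exact hTδ
  have h1 : lambdaMin (W T) ≤ v ⬝ᵥ (W T).mulVec v := lambdaMin_le_quad (W T) v hv
  rw [hfg T] at h1
  have hTpow : (0 : ℝ) < T ^ (2 * rs + 1) := pow_pos hT _
  have h2 : T ^ (2 * rs + 1) * g T ≤ T ^ (2 * rs + 1) * ((1 + ε) * (w 0 0 / c 0 0)) :=
    mul_le_mul_of_nonneg_left hgT.le hTpow.le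
  have hnorm : (enorm2 u) ^ 2 = w 0 0 := by
    simp only [enorm2, hwdef, Nat.add_zero, ← hudef]
    rw [Real.sq_sqrt (Finset.sum_nonneg fun i _ => sq_nonneg _)]
    simp only [dotProduct]
    exact Finset.sum_congr rfl fun i _ => (sq (u i)).symm ▸ (pow_two (u i))
  calc lambdaMin (W T) ≤ T ^ (2 * rs + 1) * ((1 + ε) * (w 0 0 / c 0 0)) := le_trans h1 h2
    _ = (1 + ε) * T ^ (2 * rs + 1) * (enorm2 u) ^ 2 /
        ((Nat.factorial rs : ℝ) ^ 2 * (2 * (rs : ℝ) + 1)) := by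
      rw [hnorm, ← hc00]
      field_simp
end
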